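/- Adjusted mean decomposition when covariates only deconfound the aggregate treatment: if (Σ_{t∈𝒯_a} 1(T=t)Y(t)) is conditionally independent of 1(T∈𝒯_a) given covariates X̃, then E[ E[Y | T∈𝒯_a, X̃] | X̃ ∈ 𝒳_g ] = Σ_{t∈𝒯_a} { e_{ta}(𝒳_g) μ_t(𝒳_g) + Cov(e_{ta}(X̃), μ_t(X̃) | X̃∈𝒳_g) + (E[e_{ta}(X̃)|X̃∈𝒳_g] − e_{ta}(𝒳_g)) μ_t(𝒳_g) + e_{ta}(𝒳_g) (E[μ_{t,t}(X̃)|X̃∈𝒳_g] − μ_t(𝒳_g)) + Cov(e_{ta}(X̃), μ_{t,t}(X̃) − μ_t(X̃) | X̃∈𝒳_g) + (E[e_{ta}(X̃)|X̃∈𝒳_g] − e_{ta}(𝒳_g)) (E[μ_{t,t}(X̃)|X̃∈𝒳_g] − μ_t(𝒳_g)) }, i.e. three additional selection-bias terms appear compared to the full-unconfoundedness decomposition. -/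

import Mathlib

open MeasureTheory

/-- Expectation of `Z` conditional on the event `A`: `E[Z | A]`. -/
noncomputable def cexp {Ω : Type*} [MeasurableSpace Ω] (P : Measure Ω) (A : Set Ω)
    (Z : Ω → ℝ) : ℝ :=
  (∫ ω in A, Z ω ∂P) / (P A).toReal

/-- Covariance of `Z` and `W` conditional on the event `A`: `Cov(Z, W | A)`. -/
noncomputable def ccov {Ω : Type*} [MeasurableSpace Ω] (P : Measure Ω) (A : Set Ω)
    (Z W : Ω → ℝ) : ℝ :=
  cexp P A (fun ω => Z ω * W ω) - cexp P A Z * cexp P A W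

open scoped ENNReal NNReal

lemma density_transfer {Ω 𝒳 : Type*} [MeasurableSpace Ω] [MeasurableSpace 𝒳]
    (μ ν : Measure Ω) [IsFiniteMeasure μ] [IsFiniteMeasure ν]
    (X : Ω → 𝒳) (hX : Measurable X)
    (e : 𝒳 → ℝ) (he : Measurable e) (he0 : ∀ x, 0 ≤ e x) (he1 : ∀ x, e x ≤ 1)
    (hagree : ∀ B : Set 𝒳, MeasurableSet B →
      (ν (X ⁻¹' B)).toReal = ∫ ω in X ⁻¹' B, e (X ω) ∂μ)
    (f : 𝒳 → ℝ) (hf : Measurable f)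
    (B : Set 𝒳) (hB : MeasurableSet B) :
    ∫ ω in X ⁻¹' B, f (X ω) ∂ν = ∫ ω in X ⁻¹' B, f (X ω) * e (X ω) ∂μ := by
  have hmap : ν.map X = (μ.map X).withDensity (fun x => ((e x).toNNReal : ℝ≥0∞)) := by
    ext C hC
    rw [Measure.map_apply hX hC, withDensity_apply _ hC]
    have hfin1 : ν (X ⁻¹' C) ≠ ⊤ := measure_ne_top _ _
    have hfin2 : ∫⁻ x in C, ((e x).toNNReal : ℝ≥0∞) ∂(μ.map X) ≠ ⊤ := by
      refine ne_of_lt (lt_of_le_of_lt (le_trans (lintegral_mono fun x => ?_)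
        (le_of_eq (setLIntegral_one C))) ?_)
      · exact ENNReal.ofReal_le_one.mpr (he1 x)
      · rw [Measure.map_apply hX hC]; exact measure_lt_top μ _
    have h1 : (ν (X ⁻¹' C)).toReal
        = (∫⁻ x in C, ((e x).toNNReal : ℝ≥0∞) ∂(μ.map X)).toReal := by
      rw [hagree C hC, ← setIntegral_map hC he.aestronglyMeasurable hX.aemeasurable,
        integral_eq_lintegral_of_nonneg_ae (ae_of_all _ he0) he.aestronglyMeasurable]
      simp [ENNReal.ofReal]
    exact (ENNReal.toReal_eq_toReal_iff' hfin1 hfin2).mp h1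
  rw [← setIntegral_map hB hf.aestronglyMeasurable hX.aemeasurable, hmap,
    setIntegral_withDensity_eq_setIntegral_smul he.real_toNNReal f hB,
    ← setIntegral_map (f := fun x => f x * e x) hB (hf.mul he).aestronglyMeasurable hX.aemeasurable]
  refine setIntegral_congr_fun hB fun x _ => ?_
  simp [NNReal.smul_def, Real.coe_toNNReal _ (he0 x), mul_comm]

/-- **Adjusted mean decomposition when covariates only deconfound the aggregate
treatment.** If `Σ_{t∈𝒯_a} 1(T=t) Y(t)` is conditionally independent of `1(T∈𝒯_a)`
given covariates `X̃` (stated in conditional-mean form via `hkZ`/`hCI`), then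
`E[ E[Y | T∈𝒯_a, X̃] | X̃∈𝒳_g ]
  = Σ_{t∈𝒯_a} { e_{ta}(𝒳_g) μ_t(𝒳_g) + Cov(e_{ta}(X̃), μ_t(X̃) | X̃∈𝒳_g)
      + (E[e_{ta}(X̃)|X̃∈𝒳_g] − e_{ta}(𝒳_g)) μ_t(𝒳_g)
      + e_{ta}(𝒳_g) (E[μ_{t,t}(X̃)|X̃∈𝒳_g] − μ_t(𝒳_g))
      + Cov(e_{ta}(X̃), μ_{t,t}(X̃) − μ_t(X̃) | X̃∈𝒳_g)
      + (E[e_{ta}(X̃)|X̃∈𝒳_g] − e_{ta}(𝒳_g)) (E[μ_{t,t}(X̃)|X̃∈𝒳_g] − μ_t(𝒳_g)) }`,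
i.e. three additional selection-bias terms appear compared to the
full-unconfoundedness decomposition. Here `mμ t` is a version of `E[Y(t)|X̃ = ·]`,
`mtt t` a version of `E[Y(t)|T = t, X̃ = ·]`, `ea t` a version of
`P(T = t|X̃ = ·, T∈𝒯_a)`, `eTa` a positive version of `P(T∈𝒯_a|X̃ = ·)`, and
`w` a version of the adjusted regression `E[Y|T∈𝒯_a, X̃ = ·]`. -/
theorem statement17
    {Ω 𝕋 𝒳 : Type*} [MeasurableSpace Ω] [Fintype 𝕋] [MeasurableSpace 𝕋]
    [MeasurableSingletonClass 𝕋] [DecidableEq 𝕋] [MeasurableSpace 𝒳]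
    (P : Measure Ω) [IsProbabilityMeasure P]
    (Y : 𝕋 → Ω → ℝ) (T : Ω → 𝕋) (X : Ω → 𝒳)
    (hT : Measurable T) (hX : Measurable X)
    (hYmeas : ∀ t, Measurable (Y t))
    (hYint : ∀ t, Integrable (Y t) P)
    (hYsq : ∀ t, Integrable (fun ω => Y t ω ^ 2) P)
    (Ta : Finset 𝕋)
    -- μ_t(·) = E[Y(t)|X̃ = ·] and μ_{t,t}(·) = E[Y(t)|T = t, X̃ = ·]
    (mμ mtt : 𝕋 → 𝒳 → ℝ)
    (hmμmeas : ∀ t, Measurable (mμ t)) (hmttmeas : ∀ t, Measurable (mtt t))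
    (hmμint : ∀ t, Integrable (fun ω => mμ t (X ω)) P)
    (hmttint : ∀ t, Integrable (fun ω => mtt t (X ω)) P)
    (hmμ : ∀ t, ∀ B : Set 𝒳, MeasurableSet B →
      ∫ ω in X ⁻¹' B, Y t ω ∂P = ∫ ω in X ⁻¹' B, mμ t (X ω) ∂P)
    (hmtt : ∀ t ∈ Ta, ∀ B : Set 𝒳, MeasurableSet B →
      ∫ ω in X ⁻¹' B ∩ T ⁻¹' {t}, Y t ω ∂P
        = ∫ ω in X ⁻¹' B ∩ T ⁻¹' {t}, mtt t (X ω) ∂P)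
    -- eTa(·) = P(T∈𝒯_a|X̃ = ·) > 0 and e_{ta}(·) = P(T = t|X̃ = ·, T∈𝒯_a)
    (eTa : 𝒳 → ℝ) (heTameas : Measurable eTa)
    (heTapos : ∀ x, 0 < eTa x) (heTale : ∀ x, eTa x ≤ 1)
    (heTa : ∀ B : Set 𝒳, MeasurableSet B →
      (P (X ⁻¹' B ∩ T ⁻¹' (Ta : Set 𝕋))).toReal = ∫ ω in X ⁻¹' B, eTa (X ω) ∂P)
    (ea : 𝕋 → 𝒳 → ℝ) (heameas : ∀ t, Measurable (ea t))
    (heabd : ∀ t x, 0 ≤ ea t x ∧ ea t x ≤ 1)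
    (hea : ∀ t ∈ Ta, ∀ B : Set 𝒳, MeasurableSet B →
      (P (X ⁻¹' B ∩ T ⁻¹' {t})).toReal
        = ∫ ω in X ⁻¹' B ∩ T ⁻¹' (Ta : Set 𝕋), ea t (X ω) ∂P)
    -- binary unconfoundedness: `Σ_{t∈𝒯_a} 1(T=t)Y(t) ⟂ 1(T∈𝒯_a) | X̃`, in mean form
    (kZ : 𝒳 → ℝ) (hkZmeas : Measurable kZ)
    (hkZint : Integrable (fun ω => kZ (X ω)) P)
    (hkZ : ∀ B : Set 𝒳, MeasurableSet B →
      ∫ ω in X ⁻¹' B, (∑ t ∈ Ta, if T ω = t then Y t ω else 0) ∂P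
        = ∫ ω in X ⁻¹' B, kZ (X ω) ∂P)
    (hCI : ∀ B : Set 𝒳, MeasurableSet B →
      ∫ ω in X ⁻¹' B ∩ T ⁻¹' (Ta : Set 𝕋),
          (∑ t ∈ Ta, if T ω = t then Y t ω else 0) ∂P
        = ∫ ω in X ⁻¹' B, kZ (X ω) * eTa (X ω) ∂P)
    -- `w` : version of the adjusted regression E[Y | T∈𝒯_a, X̃ = ·]
    (w : 𝒳 → ℝ) (hwmeas : Measurable w)
    (hwint : Integrable (fun ω => w (X ω)) P)
    (hw : ∀ B : Set 𝒳, MeasurableSet B →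
      ∫ ω in X ⁻¹' B ∩ T ⁻¹' (Ta : Set 𝕋), Y (T ω) ω ∂P
        = ∫ ω in X ⁻¹' B, w (X ω) * eTa (X ω) ∂P)
    (Xg : Set 𝒳) (hXg : MeasurableSet Xg)
    (hPXg : 0 < (P (X ⁻¹' Xg)).toReal)
    (hPTaXg : 0 < (P (X ⁻¹' Xg ∩ T ⁻¹' (Ta : Set 𝕋))).toReal) :
    cexp P (X ⁻¹' Xg) (fun ω => w (X ω))
      = ∑ t ∈ Ta,
          (cexp P (X ⁻¹' Xg ∩ T ⁻¹' (Ta : Set 𝕋)) (fun ω => ea t (X ω))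
              * cexp P (X ⁻¹' Xg) (fun ω => mμ t (X ω))
            + ccov P (X ⁻¹' Xg) (fun ω => ea t (X ω)) (fun ω => mμ t (X ω))
            + (cexp P (X ⁻¹' Xg) (fun ω => ea t (X ω))
                - cexp P (X ⁻¹' Xg ∩ T ⁻¹' (Ta : Set 𝕋)) (fun ω => ea t (X ω)))
                * cexp P (X ⁻¹' Xg) (fun ω => mμ t (X ω))
            + cexp P (X ⁻¹' Xg ∩ T ⁻¹' (Ta : Set 𝕋)) (fun ω => ea t (X ω))
                * (cexp P (X ⁻¹' Xg) (fun ω => mtt t (X ω))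
                    - cexp P (X ⁻¹' Xg) (fun ω => mμ t (X ω)))
            + ccov P (X ⁻¹' Xg) (fun ω => ea t (X ω))
                (fun ω => mtt t (X ω) - mμ t (X ω))
            + (cexp P (X ⁻¹' Xg) (fun ω => ea t (X ω))
                - cexp P (X ⁻¹' Xg ∩ T ⁻¹' (Ta : Set 𝕋)) (fun ω => ea t (X ω)))
                * (cexp P (X ⁻¹' Xg) (fun ω => mtt t (X ω))
                    - cexp P (X ⁻¹' Xg) (fun ω => mμ t (X ω)))) := by
  classical
  have hSmeas : MeasurableSet (T ⁻¹' (Ta : Set 𝕋)) := hT Ta.measurableSet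
  have hnorm : ∀ (t : 𝕋) x, ‖ea t x‖ ≤ 1 := fun t x => by
    rw [Real.norm_eq_abs, abs_of_nonneg (heabd t x).1]; exact (heabd t x).2
  have hTn : ∀ x, ‖eTa x‖ ≤ 1 := fun x => by
    rw [Real.norm_eq_abs, abs_of_nonneg (heTapos x).le]; exact heTale x
  set g : 𝒳 → ℝ := fun x => ∑ t ∈ Ta, ea t x * mtt t x with hg_def
  have hgmeas : Measurable g := by
    apply Finset.measurable_sum
    exact fun t _ => (heameas t).mul (hmttmeas t)
  have hint_eam : ∀ t, Integrable (fun ω => ea t (X ω) * mtt t (X ω)) P := fun t =>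
    (hmttint t).bdd_mul ((heameas t).comp hX).aestronglyMeasurable
      (ae_of_all _ fun ω => hnorm t (X ω))
  have hint_g : Integrable (fun ω => g (X ω)) P := by
    simp only [hg_def]
    exact integrable_finset_sum Ta fun t _ => hint_eam t
  -- indicator rewriting of the aggregated outcome
  have hite : ∀ t : 𝕋, (fun ω => if T ω = t then Y t ω else 0)
      = (T ⁻¹' ({t} : Set 𝕋)).indicator (Y t) := fun t => funext fun ω => by
    simp [Set.indicator_apply, Set.mem_preimage]
  have hZ0 : ∀ ω, T ω ∉ Ta → (∑ t ∈ Ta, if T ω = t then Y t ω else 0) = 0 := by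
    intro ω h
    rw [Finset.sum_ite_eq]; simp [h]
  -- main chain
  have hchain : ∀ B : Set 𝒳, MeasurableSet B →
      ∫ ω in X ⁻¹' B, w (X ω) * eTa (X ω) ∂P
        = ∫ ω in X ⁻¹' B, g (X ω) * eTa (X ω) ∂P := by
    intro B hB
    have hBm : MeasurableSet (X ⁻¹' B) := hX hB
    have hBS : MeasurableSet (X ⁻¹' B ∩ T ⁻¹' (Ta : Set 𝕋)) := hBm.inter hSmeas
    have step1 : ∫ ω in X ⁻¹' B, w (X ω) * eTa (X ω) ∂P
        = ∫ ω in X ⁻¹' B ∩ T ⁻¹' (Ta : Set 𝕋),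
            (∑ t ∈ Ta, if T ω = t then Y t ω else 0) ∂P := by
      rw [← hw B hB]
      refine setIntegral_congr_fun hBS fun ω hω => ?_
      have h : T ω ∈ Ta := hω.2
      rw [Finset.sum_ite_eq, if_pos h]
    have step2 : ∫ ω in X ⁻¹' B ∩ T ⁻¹' (Ta : Set 𝕋),
            (∑ t ∈ Ta, if T ω = t then Y t ω else 0) ∂P
        = ∫ ω in X ⁻¹' B, (∑ t ∈ Ta, if T ω = t then Y t ω else 0) ∂P := by
      rw [← setIntegral_indicator hSmeas]
      refine setIntegral_congr_fun hBm fun ω _ => ?_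
      by_cases h : ω ∈ T ⁻¹' (Ta : Set 𝕋)
      · rw [Set.indicator_of_mem h]
      · rw [Set.indicator_of_notMem h]
        exact (hZ0 ω (by simpa using h)).symm
    have step3 : ∫ ω in X ⁻¹' B, (∑ t ∈ Ta, if T ω = t then Y t ω else 0) ∂P
        = ∑ t ∈ Ta, ∫ ω in X ⁻¹' B ∩ T ⁻¹' {t}, Y t ω ∂P := by
      rw [integral_finset_sum Ta (fun t _ => by
        rw [hite t]
        exact ((hYint t).indicator (hT (measurableSet_singleton t))).integrableOn)]
      refine Finset.sum_congr rfl fun t _ => ?_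
      rw [show (fun ω => if T ω = t then Y t ω else 0) = _ from hite t,
        setIntegral_indicator (hT (measurableSet_singleton t))]
    have step4 : ∀ t ∈ Ta, ∫ ω in X ⁻¹' B ∩ T ⁻¹' {t}, mtt t (X ω) ∂P
        = ∫ ω in X ⁻¹' B ∩ T ⁻¹' (Ta : Set 𝕋), mtt t (X ω) * ea t (X ω) ∂P := by
      intro t ht
      have hagreeB : ∀ C : Set 𝒳, MeasurableSet C →
          ((P.restrict (T ⁻¹' ({t} : Set 𝕋))) (X ⁻¹' C)).toReal
            = ∫ ω in X ⁻¹' C, ea t (X ω) ∂(P.restrict (T ⁻¹' (Ta : Set 𝕋))) := by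
        intro C hC
        rw [Measure.restrict_apply (hX hC), Measure.restrict_restrict (hX hC)]
        exact hea t ht C hC
      have h := density_transfer (P.restrict (T ⁻¹' (Ta : Set 𝕋)))
        (P.restrict (T ⁻¹' ({t} : Set 𝕋))) X hX (ea t) (heameas t)
        (fun x => (heabd t x).1) (fun x => (heabd t x).2) hagreeB (mtt t)
        (hmttmeas t) B hB
      rw [Measure.restrict_restrict hBm, Measure.restrict_restrict hBm] at h
      exact h
    have step5 : ∑ t ∈ Ta, ∫ ω in X ⁻¹' B ∩ T ⁻¹' (Ta : Set 𝕋),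
            mtt t (X ω) * ea t (X ω) ∂P
        = ∫ ω in X ⁻¹' B ∩ T ⁻¹' (Ta : Set 𝕋), g (X ω) ∂P := by
      simp only [hg_def]
      rw [integral_finset_sum Ta (fun t _ => (hint_eam t).integrableOn)]
      exact Finset.sum_congr rfl fun t _ =>
        setIntegral_congr_fun hBS fun ω _ => mul_comm _ _
    have step6 : ∫ ω in X ⁻¹' B ∩ T ⁻¹' (Ta : Set 𝕋), g (X ω) ∂P
        = ∫ ω in X ⁻¹' B, g (X ω) * eTa (X ω) ∂P := by
      have hagreeA : ∀ C : Set 𝒳, MeasurableSet C →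
          ((P.restrict (T ⁻¹' (Ta : Set 𝕋))) (X ⁻¹' C)).toReal
            = ∫ ω in X ⁻¹' C, eTa (X ω) ∂P := by
        intro C hC
        rw [Measure.restrict_apply (hX hC)]
        exact heTa C hC
      have h := density_transfer P (P.restrict (T ⁻¹' (Ta : Set 𝕋))) X hX eTa
        heTameas (fun x => (heTapos x).le) heTale hagreeA g hgmeas B hB
      rw [Measure.restrict_restrict hBm] at h
      exact h
    rw [step1, step2, step3, Finset.sum_congr rfl (fun t ht => (hmtt t ht B hB).trans
      (step4 t ht)), step5, step6]
  -- a.e. identification of w with g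
  set μ' := P.map X with hμ'_def
  haveI : IsProbabilityMeasure μ' := Measure.isProbabilityMeasure_map hX.aemeasurable
  have hwμ' : Integrable w μ' :=
    (integrable_map_measure hwmeas.aestronglyMeasurable hX.aemeasurable).mpr hwint
  have hgμ' : Integrable g μ' :=
    (integrable_map_measure hgmeas.aestronglyMeasurable hX.aemeasurable).mpr hint_g
  have hFμ' : Integrable (fun x => w x * eTa x) μ' := by
    have h := hwμ'.bdd_mul heTameas.aestronglyMeasurable (ae_of_all _ fun x => hTn x)
    have e : (fun x => eTa x * w x) = fun x => w x * eTa x :=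
      funext fun x => mul_comm _ _
    rwa [e] at h
  have hGμ' : Integrable (fun x => g x * eTa x) μ' := by
    have h := hgμ'.bdd_mul heTameas.aestronglyMeasurable (ae_of_all _ fun x => hTn x)
    have e : (fun x => eTa x * g x) = fun x => g x * eTa x :=
      funext fun x => mul_comm _ _
    rwa [e] at h
  have heq : ∀ s : Set 𝒳, MeasurableSet s →
      ∫ x in s, w x * eTa x ∂μ' = ∫ x in s, g x * eTa x ∂μ' := by
    intro s hs
    rw [hμ'_def, setIntegral_map (f := fun x => w x * eTa x) hs (hwmeas.mul heTameas).aestronglyMeasurable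
        hX.aemeasurable,
      setIntegral_map (f := fun x => g x * eTa x) hs (hgmeas.mul heTameas).aestronglyMeasurable hX.aemeasurable]
    exact hchain s hs
  have hae : (fun x => w x * eTa x) =ᵐ[μ'] fun x => g x * eTa x :=
    ae_eq_of_forall_setIntegral_eq_of_sigmaFinite
      (fun s _ _ => hFμ'.integrableOn) (fun s _ _ => hGμ'.integrableOn)
      (fun s hs _ => heq s hs)
  have hae2 : w =ᵐ[μ'] g := hae.mono fun x hx =>
    mul_right_cancel₀ (ne_of_gt (heTapos x)) hx
  have hkey : ∫ ω in X ⁻¹' Xg, w (X ω) ∂P = ∫ ω in X ⁻¹' Xg, g (X ω) ∂P := by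
    rw [← setIntegral_map hXg hwmeas.aestronglyMeasurable hX.aemeasurable,
      ← setIntegral_map hXg hgmeas.aestronglyMeasurable hX.aemeasurable]
    exact setIntegral_congr_ae hXg (hae2.mono fun x hx _ => hx)
  have hsum : ∫ ω in X ⁻¹' Xg, g (X ω) ∂P
      = ∑ t ∈ Ta, ∫ ω in X ⁻¹' Xg, ea t (X ω) * mtt t (X ω) ∂P := by
    simp only [hg_def]
    exact integral_finset_sum Ta fun t _ => (hint_eam t).integrableOn
  -- algebraic simplification of each summand
  have hterm : ∀ t ∈ Ta,
      (cexp P (X ⁻¹' Xg ∩ T ⁻¹' (Ta : Set 𝕋)) (fun ω => ea t (X ω))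
          * cexp P (X ⁻¹' Xg) (fun ω => mμ t (X ω))
        + ccov P (X ⁻¹' Xg) (fun ω => ea t (X ω)) (fun ω => mμ t (X ω))
        + (cexp P (X ⁻¹' Xg) (fun ω => ea t (X ω))
            - cexp P (X ⁻¹' Xg ∩ T ⁻¹' (Ta : Set 𝕋)) (fun ω => ea t (X ω)))
            * cexp P (X ⁻¹' Xg) (fun ω => mμ t (X ω))
        + cexp P (X ⁻¹' Xg ∩ T ⁻¹' (Ta : Set 𝕋)) (fun ω => ea t (X ω))
            * (cexp P (X ⁻¹' Xg) (fun ω => mtt t (X ω))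
                - cexp P (X ⁻¹' Xg) (fun ω => mμ t (X ω)))
        + ccov P (X ⁻¹' Xg) (fun ω => ea t (X ω))
            (fun ω => mtt t (X ω) - mμ t (X ω))
        + (cexp P (X ⁻¹' Xg) (fun ω => ea t (X ω))
            - cexp P (X ⁻¹' Xg ∩ T ⁻¹' (Ta : Set 𝕋)) (fun ω => ea t (X ω)))
            * (cexp P (X ⁻¹' Xg) (fun ω => mtt t (X ω))
                - cexp P (X ⁻¹' Xg) (fun ω => mμ t (X ω))))
      = cexp P (X ⁻¹' Xg) (fun ω => ea t (X ω) * mtt t (X ω)) := by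
    intro t _
    have I1 : IntegrableOn (fun ω => ea t (X ω) * mμ t (X ω)) (X ⁻¹' Xg) P :=
      ((hmμint t).bdd_mul ((heameas t).comp hX).aestronglyMeasurable
        (ae_of_all _ fun ω => hnorm t (X ω))).integrableOn
    have I2 : IntegrableOn (fun ω => ea t (X ω) * mtt t (X ω)) (X ⁻¹' Xg) P :=
      (hint_eam t).integrableOn
    have I3 : IntegrableOn (fun ω => mtt t (X ω)) (X ⁻¹' Xg) P :=
      (hmttint t).integrableOn
    have I4 : IntegrableOn (fun ω => mμ t (X ω)) (X ⁻¹' Xg) P :=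
      (hmμint t).integrableOn
    have h5 : cexp P (X ⁻¹' Xg) (fun ω => ea t (X ω) * (mtt t (X ω) - mμ t (X ω)))
        = cexp P (X ⁻¹' Xg) (fun ω => ea t (X ω) * mtt t (X ω))
          - cexp P (X ⁻¹' Xg) (fun ω => ea t (X ω) * mμ t (X ω)) := by
      unfold cexp
      rw [← sub_div]
      congr 1
      simp only [mul_sub]
      exact integral_sub I2 I1
    have h6 : cexp P (X ⁻¹' Xg) (fun ω => mtt t (X ω) - mμ t (X ω))
        = cexp P (X ⁻¹' Xg) (fun ω => mtt t (X ω))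
          - cexp P (X ⁻¹' Xg) (fun ω => mμ t (X ω)) := by
      unfold cexp
      rw [integral_sub I3 I4, sub_div]
    simp only [ccov]
    rw [h5, h6]
    ring
  rw [Finset.sum_congr rfl hterm]
  simp only [cexp]
  rw [hkey, hsum, Finset.sum_div]
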